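/- Let θ : F² → End_k(F) be the k-linear map determined by θ(a ⊗ a')(b) = Tr_{F/k}(a'·b)·a for a, a', b ∈ F. Then θ is bijective, and for all x, y ∈ F², θ(x ⋆_1 y) = θ(x) ∘ θ(y), where 1 denotes the identity element of F³. Hence A(F,1) is isomorphic as a k-algebra to End_k(F), the algebra of k-linear endomorphisms of F. -/

import Mathlib

open TensorProduct

universe u

variable (k F : Type u) [Field k] [CommRing F] [Algebra k F]

/-- `ε₀ : F ⊗ F → F ⊗ F ⊗ F`, `x ⊗ y ↦ 1 ⊗ x ⊗ y`. -/
noncomputable def eps0 : F ⊗[k] F →ₐ[k] F ⊗[k] (F ⊗[k] F) :=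
  Algebra.TensorProduct.includeRight

/-- `ε₁ : F ⊗ F → F ⊗ F ⊗ F`, `x ⊗ y ↦ x ⊗ 1 ⊗ y`. -/
noncomputable def eps1 : F ⊗[k] F →ₐ[k] F ⊗[k] (F ⊗[k] F) :=
  Algebra.TensorProduct.map (AlgHom.id k F) Algebra.TensorProduct.includeRight

/-- `ε₂ : F ⊗ F → F ⊗ F ⊗ F`, `x ⊗ y ↦ x ⊗ y ⊗ 1`. -/
noncomputable def eps2 : F ⊗[k] F →ₐ[k] F ⊗[k] (F ⊗[k] F) :=
  Algebra.TensorProduct.map (AlgHom.id k F) Algebra.TensorProduct.includeLeft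

/-- `F³` regarded as an `F²`-algebra via `ε₁`. -/
noncomputable instance : Algebra (F ⊗[k] F) (F ⊗[k] (F ⊗[k] F)) :=
  (eps1 k F).toRingHom.toAlgebra

/-- The trace of `F³` as an `F²`-algebra (via `ε₁`). -/
noncomputable def trF3 : F ⊗[k] (F ⊗[k] F) →ₗ[F ⊗[k] F] F ⊗[k] F :=
  Algebra.trace (F ⊗[k] F) (F ⊗[k] (F ⊗[k] F))

/-- The Brauer-factor-set multiplication `⋆_c` on `F²` attached to `c ∈ F³`,
`x ⋆_c y = Tr(ε₂(x)·c·ε₀(y))`. The `k`-vector space `F²` with this multiplication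
is the algebra `A(F,c)`. -/
noncomputable def starMul (c : F ⊗[k] (F ⊗[k] F)) (x y : F ⊗[k] F) : F ⊗[k] F :=
  trF3 k F (eps2 k F x * c * eps0 k F y)


/-- The `k`-linear map `θ : F² → End_k(F)` with `θ(a ⊗ a')(b) = Tr_{F/k}(a'·b) • a`. -/
noncomputable def theta : F ⊗[k] F →ₗ[k] Module.End k F :=
  (dualTensorHom k F F) ∘ₗ
    (TensorProduct.map (Algebra.traceForm k F) LinearMap.id) ∘ₗ
    (TensorProduct.comm k F F).toLinearMap

/-! Let `e ∈ F ⊗ F` be the separability idempotent of the étale algebra `F`. Since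
`e * w = μ(w) • e` for the multiplication `μ : F ⊗ F → F`, multiplication by `(1 ⊗ a) * e` on
`F ⊗ F` (over the left factor) has rank one, so its trace is `μ((1 ⊗ a) * e) = a`. Writing
`e = ∑ xᵢ ⊗ yᵢ`, this reads `a = ∑ Tr(yᵢ a) xᵢ`, hence the trace form of `F` is nondegenerate and
`θ` is a composite of three isomorphisms.

Through `ε₁`, `F³` is the base change of its middle factor to `F²`, so
`Tr(a ⊗ m ⊗ b) = Tr_{F/k}(m) • (a ⊗ b)`. On pure tensors both `θ(x ⋆₁ y)` and `θ(x) ∘ θ(y)` then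
send `c` to `Tr(a' b) Tr(b' c) a`. -/

theorem Algebra.trace_baseChange_tmul {R S : Type*} [CommRing R] [CommRing S] [Algebra R S]
    [Module.Free R S] [Module.Finite R S] (A : Type*) [CommRing A] [Algebra R A] (a : A) (s : S) :
    Algebra.trace A (A ⊗[R] S) (a ⊗ₜ s) = Algebra.trace R S s • a := by
  have hlmul : Algebra.lmul A (A ⊗[R] S) (1 ⊗ₜ s) = (Algebra.lmul R S s).baseChange A := by
    ext x
    simp
  have hsmul : a ⊗ₜ[R] s = a • (1 : A) ⊗ₜ[R] s := by rw [smul_tmul', smul_eq_mul, mul_one]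
  rw [hsmul, map_smul, Algebra.trace_apply, hlmul, LinearMap.trace_baseChange, smul_eq_mul,
    Algebra.smul_def, mul_comm, Algebra.trace_apply]

namespace Algebra.FormallyUnramified

variable {R S : Type*} [CommRing R] [CommRing S] [Algebra R S] [FormallyUnramified R S]
  [EssFiniteType R S]

open Algebra.TensorProduct

lemma elem_mul (w : S ⊗[R] S) : elem R S * w = lmul' R w • elem R S := by
  induction w using TensorProduct.induction_on with
  | zero => simp
  | tmul x y =>
    have hxy : x ⊗ₜ[R] y = (x ⊗ₜ 1) * (1 ⊗ₜ y) := by rw [tmul_mul_tmul, mul_one, one_mul]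
    rw [Algebra.smul_def, Algebra.TensorProduct.algebraMap_apply, lmul'_apply_tmul,
      algebraMap_self_apply, hxy, mul_comm, mul_assoc, one_tmul_mul_elem, ← mul_assoc,
      tmul_mul_tmul, mul_one]
  | add u v hu hv => rw [mul_add, hu, hv, map_add, add_smul]

variable [Module.Free R S] [Module.Finite R S]

lemma trace_mul_elem (x : S ⊗[R] S) :
    Algebra.trace S (S ⊗[R] S) (x * elem R S) = lmul' R (x * elem R S) := by
  have hlmul : Algebra.lmul S (S ⊗[R] S) (x * elem R S)
      = (lmul'' R).toLinearMap.smulRight (x * elem R S) := by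
    refine LinearMap.ext fun w ↦ ?_
    show x * elem R S * w = lmul' R w • (x * elem R S)
    rw [mul_assoc, elem_mul, mul_smul_comm]
  rw [Algebra.trace_apply, hlmul, LinearMap.trace_smulRight]
  rfl

lemma trace_one_tmul_mul_elem (a : S) :
    Algebra.trace S (S ⊗[R] S) ((1 ⊗ₜ a) * elem R S) = a := by
  rw [trace_mul_elem, one_tmul_mul_elem, map_mul, lmul'_apply_tmul, lmul_elem, mul_one, mul_one]

theorem traceForm_nondegenerate : (Algebra.traceForm R S).Nondegenerate := by
  refine (LinearMap.IsRefl.nondegenerate_iff_separatingLeft (B := traceForm R S)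
    (traceForm_isSymm R).isRefl).mpr fun a ha ↦ ?_
  have htrace : ∀ z : S ⊗[R] S, Algebra.trace S (S ⊗[R] S) ((1 ⊗ₜ a) * z) = 0 := by
    intro z
    induction z using TensorProduct.induction_on with
    | zero => simp
    | tmul x y =>
      rw [tmul_mul_tmul, one_mul, Algebra.trace_baseChange_tmul, ← traceForm_apply, ha, zero_smul]
    | add u v hu hv => rw [mul_add, map_add, hu, hv, add_zero]
  rw [← trace_one_tmul_mul_elem (R := R) a, htrace]

end Algebra.FormallyUnramified

theorem theta_tmul_apply (a a' b : F) :
    theta k F (a ⊗ₜ[k] a') b = Algebra.trace k F (a' * b) • a := by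
  simp [theta, Algebra.traceForm_apply]

theorem theta_bijective [FiniteDimensional k F] [Algebra.Etale k F] :
    Function.Bijective (theta k F) :=
  (dualTensorHomEquiv k F F).bijective.comp <|
    (TensorProduct.map_bijective
      ((Algebra.traceForm k F).toDual Algebra.FormallyUnramified.traceForm_nondegenerate).bijective
      Function.bijective_id).comp (TensorProduct.comm k F F).bijective

/-- `a ⊗ m ⊗ b ↦ (a ⊗ b) ⊗ m`: through `ε₁`, `F³` is the base change of its middle factor to `F²`. -/
noncomputable def tensorTripleEquiv : F ⊗[k] (F ⊗[k] F) ≃ₐ[F ⊗[k] F] (F ⊗[k] F) ⊗[k] F :=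
  AlgEquiv.ofRingEquiv
    (f := ((Algebra.TensorProduct.congr AlgEquiv.refl (Algebra.TensorProduct.comm k F F)).trans
      (Algebra.TensorProduct.assoc k k k F F F).symm).toRingEquiv) fun x ↦ by
    induction x using TensorProduct.induction_on with
    | zero => simp
    | tmul a b => simp [RingHom.algebraMap_toAlgebra, eps1, Algebra.TensorProduct.algebraMap_apply]
    | add x y hx hy => simp only [map_add, hx, hy]

theorem tensorTripleEquiv_tmul (a m b : F) :
    tensorTripleEquiv k F (a ⊗ₜ (m ⊗ₜ b)) = (a ⊗ₜ b) ⊗ₜ m := by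
  simp [tensorTripleEquiv]

theorem trF3_tmul [FiniteDimensional k F] (a m b : F) :
    trF3 k F (a ⊗ₜ (m ⊗ₜ b)) = Algebra.trace k F m • (a ⊗ₜ b) := by
  rw [trF3, ← Algebra.trace_eq_of_algEquiv (tensorTripleEquiv k F), tensorTripleEquiv_tmul,
    Algebra.trace_baseChange_tmul]

theorem starMul_one_tmul [FiniteDimensional k F] (a a' b b' : F) :
    starMul k F 1 (a ⊗ₜ a') (b ⊗ₜ b') = Algebra.trace k F (a' * b) • (a ⊗ₜ b') := by
  have h : eps2 k F (a ⊗ₜ a') * 1 * eps0 k F (b ⊗ₜ b') = a ⊗ₜ ((a' * b) ⊗ₜ b') := by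
    simp [eps0, eps2, Algebra.TensorProduct.tmul_mul_tmul]
  rw [starMul, h, trF3_tmul]

theorem starMul_add_left (c : F ⊗[k] (F ⊗[k] F)) (x x' y : F ⊗[k] F) :
    starMul k F c (x + x') y = starMul k F c x y + starMul k F c x' y := by
  simp only [starMul, map_add, add_mul]

theorem starMul_add_right (c : F ⊗[k] (F ⊗[k] F)) (x y y' : F ⊗[k] F) :
    starMul k F c x (y + y') = starMul k F c x y + starMul k F c x y' := by
  simp only [starMul, map_add, mul_add]

theorem theta_starMul_one [FiniteDimensional k F] (x y : F ⊗[k] F) :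
    theta k F (starMul k F 1 x y) = theta k F x ∘ₗ theta k F y := by
  induction x using TensorProduct.induction_on with
  | zero => simp [starMul]
  | add x x' hx hx' => rw [starMul_add_left, map_add, map_add, hx, hx', LinearMap.add_comp]
  | tmul a a' =>
    induction y using TensorProduct.induction_on with
    | zero => simp [starMul]
    | add y y' hy hy' => rw [starMul_add_right, map_add, map_add, hy, hy', LinearMap.comp_add]
    | tmul b b' =>
      ext c
      simp only [starMul_one_tmul, map_smul, LinearMap.smul_apply, LinearMap.comp_apply,
        theta_tmul_apply, smul_smul, mul_comm]

theorem theta_bijective_and_multiplicative [FiniteDimensional k F] [Algebra.Etale k F] :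
    (∀ (a a' b : F), theta k F (a ⊗ₜ[k] a') b = Algebra.trace k F (a' * b) • a) ∧
    Function.Bijective (theta k F) ∧
    (∀ x y : F ⊗[k] F,
      theta k F (starMul k F (1 : F ⊗[k] (F ⊗[k] F)) x y) = theta k F x ∘ₗ theta k F y) :=
  ⟨theta_tmul_apply k F, theta_bijective k F, theta_starMul_one k F⟩
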